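/- Let σ ∈ ℝ with σ² = 1 and let u, ψ : ℝ × ℝ → ℍ be smooth with u_t = σ u_x² + u_xxx (the quaternion potential KdV equation) and ψ_t = 4ψ_xxx + 2σ u_x*ψ_x + σ u_xx*ψ. Then the function φ := ψ_xx + (σ/3) u_x*ψ satisfies φ_t = 4φ_xxx + 2σ u_x*φ_x + σ u_xx*φ. (Left-multiplication Lax pair L = ∂_x² + (σ/3)u_x, M = 4∂_x³ + 2σu_x∂_x + σu_xx for the potential KdV equation.) -/

import Mathlib

/-- Partial derivative in `t` (the first coordinate). -/
noncomputable def pt (f : ℝ × ℝ → Quaternion ℝ) : ℝ × ℝ → Quaternion ℝ :=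
  fun p => deriv (fun s => f (s, p.2)) p.1

/-- Partial derivative in `x` (the second coordinate). -/
noncomputable def px (f : ℝ × ℝ → Quaternion ℝ) : ℝ × ℝ → Quaternion ℝ :=
  fun p => deriv (fun y => f (p.1, y)) p.2

namespace PKdVAux

abbrev Q' := Quaternion ℝ

lemma diffY {f : ℝ × ℝ → Q'} (hf : ContDiff ℝ (⊤ : ℕ∞) f) (a b : ℝ) :
    DifferentiableAt ℝ (fun y => f (a, y)) b :=
  (hf.differentiable (by simp) (a, b)).comp b
    ((differentiableAt_const a).prodMk differentiableAt_id)

lemma diffX {f : ℝ × ℝ → Q'} (hf : ContDiff ℝ (⊤ : ℕ∞) f) (a b : ℝ) :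
    DifferentiableAt ℝ (fun s => f (s, b)) a :=
  (hf.differentiable (by simp) (a, b)).comp a
    (differentiableAt_id.prodMk (differentiableAt_const b))

lemma hasDerivY {f : ℝ × ℝ → Q'} (hf : ContDiff ℝ (⊤ : ℕ∞) f) (p : ℝ × ℝ) :
    HasDerivAt (fun y => f (p.1, y)) (px f p) p.2 :=
  (diffY hf p.1 p.2).hasDerivAt

lemma hasDerivX {f : ℝ × ℝ → Q'} (hf : ContDiff ℝ (⊤ : ℕ∞) f) (p : ℝ × ℝ) :
    HasDerivAt (fun s => f (s, p.2)) (pt f p) p.1 :=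
  (diffX hf p.1 p.2).hasDerivAt

lemma px_eq_fderiv {f : ℝ × ℝ → Q'} (hf : ContDiff ℝ (⊤ : ℕ∞) f) :
    px f = fun p => fderiv ℝ f p (0, 1) := by
  funext p
  exact ((hf.differentiable (by simp) p).hasFDerivAt.comp_hasDerivAt p.2
    ((hasDerivAt_const p.2 p.1).prodMk (hasDerivAt_id p.2))).deriv

lemma pt_eq_fderiv {f : ℝ × ℝ → Q'} (hf : ContDiff ℝ (⊤ : ℕ∞) f) :
    pt f = fun p => fderiv ℝ f p (1, 0) := by
  funext p
  exact ((hf.differentiable (by simp) p).hasFDerivAt.comp_hasDerivAt p.1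
    ((hasDerivAt_id p.1).prodMk (hasDerivAt_const p.1 p.2))).deriv

lemma contDiff_px {f : ℝ × ℝ → Q'} (hf : ContDiff ℝ (⊤ : ℕ∞) f) : ContDiff ℝ (⊤ : ℕ∞) (px f) := by
  rw [px_eq_fderiv hf]
  exact (hf.fderiv_right (by simp)).clm_apply contDiff_const

lemma contDiff_pt {f : ℝ × ℝ → Q'} (hf : ContDiff ℝ (⊤ : ℕ∞) f) : ContDiff ℝ (⊤ : ℕ∞) (pt f) := by
  rw [pt_eq_fderiv hf]
  exact (hf.fderiv_right (by simp)).clm_apply contDiff_const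

lemma pt_px {f : ℝ × ℝ → Q'} (hf : ContDiff ℝ (⊤ : ℕ∞) f) : pt (px f) = px (pt f) := by
  have hf1 : Differentiable ℝ f := hf.differentiable (by simp)
  have hfd : ContDiff ℝ (⊤ : ℕ∞) (fderiv ℝ f) := hf.fderiv_right (by simp)
  rw [px_eq_fderiv hf, pt_eq_fderiv hf]
  funext p
  have hder : ∀ v : ℝ × ℝ, HasFDerivAt (fun q => fderiv ℝ f q v)
      ((ContinuousLinearMap.apply ℝ Q' v).comp (fderiv ℝ (fderiv ℝ f) p)) p :=
    fun v => ((ContinuousLinearMap.apply ℝ Q' v).hasFDerivAt).comp p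
      (hfd.differentiable (by simp) p).hasFDerivAt
  have hL : pt (fun q => fderiv ℝ f q (0, 1)) p
      = fderiv ℝ (fderiv ℝ f) p (1, 0) (0, 1) := by
    have := ((hder (0, 1)).comp_hasDerivAt p.1
      ((hasDerivAt_id p.1).prodMk (hasDerivAt_const p.1 p.2))).deriv
    simpa [pt, Function.comp_def] using this
  have hR : px (fun q => fderiv ℝ f q (1, 0)) p
      = fderiv ℝ (fderiv ℝ f) p (0, 1) (1, 0) := by
    have := ((hder (1, 0)).comp_hasDerivAt p.2
      ((hasDerivAt_const p.2 p.1).prodMk (hasDerivAt_id p.2))).deriv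
    simpa [px, Function.comp_def] using this
  rw [hL, hR]
  exact second_derivative_symmetric (fun y => (hf1 y).hasFDerivAt)
    (hfd.differentiable (by simp) p).hasFDerivAt (1, 0) (0, 1)

end PKdVAux

set_option maxHeartbeats 2000000 in
open PKdVAux in
/-- Left-multiplication Lax pair `L = ∂ₓ² + (σ/3)uₓ`, `M = 4∂ₓ³ + 2σuₓ∂ₓ + σuₓₓ`
for the quaternion potential KdV equation `uₜ = σ uₓ² + uₓₓₓ`. -/
theorem pkdv_lax_left (σ : ℝ) (hσ : σ ^ 2 = 1) (u ψ φ : ℝ × ℝ → Quaternion ℝ)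
    (hu : ContDiff ℝ (⊤ : ℕ∞) u) (hψ : ContDiff ℝ (⊤ : ℕ∞) ψ)
    (hut : ∀ p, pt u p = σ • (px u p) ^ 2 + px (px (px u)) p)
    (hψt : ∀ p, pt ψ p = (4 : ℝ) • px (px (px ψ)) p + (2 * σ) • (px u p * px ψ p)
      + σ • (px (px u) p * ψ p))
    (hφ : φ = fun p => px (px ψ) p + (σ / 3) • (px u p * ψ p)) :
    ∀ p, pt φ p = (4 : ℝ) • px (px (px φ)) p + (2 * σ) • (px u p * px φ p)
      + σ • (px (px u) p * φ p) := by
  subst hφ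
  -- smoothness of iterated derivatives
  have hu1 : ContDiff ℝ (⊤ : ℕ∞) (px u) := contDiff_px hu
  have hu2 : ContDiff ℝ (⊤ : ℕ∞) (px (px u)) := contDiff_px hu1
  have hu3 : ContDiff ℝ (⊤ : ℕ∞) (px (px (px u))) := contDiff_px hu2
  have hp1 : ContDiff ℝ (⊤ : ℕ∞) (px ψ) := contDiff_px hψ
  have hp2 : ContDiff ℝ (⊤ : ℕ∞) (px (px ψ)) := contDiff_px hp1
  have hp3 : ContDiff ℝ (⊤ : ℕ∞) (px (px (px ψ))) := contDiff_px hp2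
  have hp4 : ContDiff ℝ (⊤ : ℕ∞) (px (px (px (px ψ)))) := contDiff_px hp3
  -- expansion of px (pt u)
  have HU : pt (px u) = fun p =>
      σ • (px (px u) p * px u p + px u p * px (px u) p) + px (px (px (px u))) p := by
    rw [pt_px hu]
    funext p
    have hfun : (fun y => pt u (p.1, y)) = fun y =>
        σ • (px u (p.1, y) * px u (p.1, y)) + px (px (px u)) (p.1, y) := by
      funext y; rw [hut (p.1, y), sq]
    show deriv (fun y => pt u (p.1, y)) p.2 = _
    rw [hfun]
    exact ((((hasDerivY hu1 p).mul (hasDerivY hu1 p)).const_smul σ).add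
      (hasDerivY hu3 p)).deriv
  -- expansion of px (pt ψ)
  have G1 : px (pt ψ) = fun p =>
      (4 : ℝ) • px (px (px (px ψ))) p
        + (2 * σ) • (px (px u) p * px ψ p + px u p * px (px ψ) p)
        + σ • (px (px (px u)) p * ψ p + px (px u) p * px ψ p) := by
    funext p
    have hfun : (fun y => pt ψ (p.1, y)) = fun y =>
        (4 : ℝ) • px (px (px ψ)) (p.1, y) + (2 * σ) • (px u (p.1, y) * px ψ (p.1, y))
          + σ • (px (px u) (p.1, y) * ψ (p.1, y)) := by
      funext y; rw [hψt (p.1, y)]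
    show deriv (fun y => pt ψ (p.1, y)) p.2 = _
    rw [hfun]
    exact ((((hasDerivY hp3 p).const_smul (4 : ℝ)).add
      (((hasDerivY hu1 p).mul (hasDerivY hp1 p)).const_smul (2 * σ))).add
      (((hasDerivY hu2 p).mul (hasDerivY hψ p)).const_smul σ)).deriv
  -- expansion of px (px (pt ψ))
  have G2 : px (fun p =>
      (4 : ℝ) • px (px (px (px ψ))) p
        + (2 * σ) • (px (px u) p * px ψ p + px u p * px (px ψ) p)
        + σ • (px (px (px u)) p * ψ p + px (px u) p * px ψ p)) = fun p =>
      (4 : ℝ) • px (px (px (px (px ψ)))) p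
        + (2 * σ) • ((px (px (px u)) p * px ψ p + px (px u) p * px (px ψ) p)
            + (px (px u) p * px (px ψ) p + px u p * px (px (px ψ)) p))
        + σ • ((px (px (px (px u))) p * ψ p + px (px (px u)) p * px ψ p)
            + (px (px (px u)) p * px ψ p + px (px u) p * px (px ψ) p)) := by
    funext p
    exact ((((hasDerivY hp4 p).const_smul (4 : ℝ)).add
      ((((hasDerivY hu2 p).mul (hasDerivY hp1 p)).add
        ((hasDerivY hu1 p).mul (hasDerivY hp2 p))).const_smul (2 * σ))).add
      ((((hasDerivY hu3 p).mul (hasDerivY hψ p)).add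
        ((hasDerivY hu2 p).mul (hasDerivY hp1 p))).const_smul σ)).deriv
  -- chain rule commutation for pt (px (px ψ))
  have Hchain : pt (px (px ψ)) = px (px (pt ψ)) := by
    rw [pt_px hp1, pt_px hψ]
  -- expansions of derivatives of φ
  have F1 : px (fun p => px (px ψ) p + (σ / 3) • (px u p * ψ p)) = fun p =>
      px (px (px ψ)) p + (σ / 3) • (px (px u) p * ψ p + px u p * px ψ p) := by
    funext p
    exact ((hasDerivY hp2 p).add
      (((hasDerivY hu1 p).mul (hasDerivY hψ p)).const_smul (σ / 3))).deriv
  have F2 : px (fun p =>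
      px (px (px ψ)) p + (σ / 3) • (px (px u) p * ψ p + px u p * px ψ p)) = fun p =>
      px (px (px (px ψ))) p + (σ / 3) • ((px (px (px u)) p * ψ p + px (px u) p * px ψ p)
        + (px (px u) p * px ψ p + px u p * px (px ψ) p)) := by
    funext p
    exact ((hasDerivY hp3 p).add
      ((((hasDerivY hu2 p).mul (hasDerivY hψ p)).add
        ((hasDerivY hu1 p).mul (hasDerivY hp1 p))).const_smul (σ / 3))).deriv
  have F3 : px (fun p =>
      px (px (px (px ψ))) p + (σ / 3) • ((px (px (px u)) p * ψ p + px (px u) p * px ψ p)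
        + (px (px u) p * px ψ p + px u p * px (px ψ) p))) = fun p =>
      px (px (px (px (px ψ)))) p
        + (σ / 3) • (((px (px (px (px u))) p * ψ p + px (px (px u)) p * px ψ p)
            + (px (px (px u)) p * px ψ p + px (px u) p * px (px ψ) p))
          + ((px (px (px u)) p * px ψ p + px (px u) p * px (px ψ) p)
            + (px (px u) p * px (px ψ) p + px u p * px (px (px ψ)) p))) := by
    funext p
    exact ((hasDerivY hp4 p).add
      (((((hasDerivY hu3 p).mul (hasDerivY hψ p)).add
          ((hasDerivY hu2 p).mul (hasDerivY hp1 p))).add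
        (((hasDerivY hu2 p).mul (hasDerivY hp1 p)).add
          ((hasDerivY hu1 p).mul (hasDerivY hp2 p)))).const_smul (σ / 3))).deriv
  -- time derivative of φ
  have HT : pt (fun p => px (px ψ) p + (σ / 3) • (px u p * ψ p)) = fun p =>
      pt (px (px ψ)) p + (σ / 3) • (pt (px u) p * ψ p + px u p * pt ψ p) := by
    funext p
    exact ((hasDerivX hp2 p).add
      (((hasDerivX hu1 p).mul (hasDerivX hψ p)).const_smul (σ / 3))).deriv
  intro p
  rw [HT, F1, F2, F3, Hchain, G1, G2, HU]
  simp only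
  rw [hψt p]
  have hσ' : σ = 1 ∨ σ = -1 := mul_self_eq_one_iff.mp (by rw [← sq]; exact hσ)
  generalize px (px (px (px (px ψ)))) p = e5
  generalize px (px (px (px ψ))) p = e4
  generalize px (px (px ψ)) p = e3
  generalize px (px ψ) p = e2
  generalize px ψ p = e1
  generalize px (px (px (px u))) p = d4
  generalize px (px (px u)) p = d3
  generalize px (px u) p = d2
  generalize px u p = d1
  generalize ψ p = e0
  rcases hσ' with h | h <;> subst h <;>
  · simp only [smul_add, mul_add, add_mul, smul_mul_assoc, mul_smul_comm, smul_smul,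
      mul_assoc]
    module
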